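/- arXiv:math/0203158 — 2 statements merged into one kernel-verified Lean document; each statement's English description precedes it below -/
import Mathlib

section
/- The composite maps βγ, γα, αβ, and αβγ on T^7 = ℝ^7/ℤ^7 have no fixed points. -/
noncomputable section

/-- The circle `ℝ/ℤ`. -/
abbrev A : Type := AddCircle (1 : ℝ)

/-- The 7-torus `T⁷ = ℝ⁷/ℤ⁷`, as a product of seven circles. -/
abbrev T7 : Type := A × A × A × A × A × A × A

/-- `½ ∈ ℝ/ℤ`. -/
def half : A := ((1/2 : ℝ) : A)

/-- `α(x) = (x₁,x₂,x₃,−x₄,−x₅,−x₆,−x₇)` -/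
def alphaT : T7 → T7 := fun (x1, x2, x3, x4, x5, x6, x7) =>
  (x1, x2, x3, -x4, -x5, -x6, -x7)

/-- `β(x) = (x₁,−x₂,−x₃,x₄,x₅,½−x₆,−x₇)` -/
def betaT : T7 → T7 := fun (x1, x2, x3, x4, x5, x6, x7) =>
  (x1, -x2, -x3, x4, x5, half - x6, -x7)

/-- `γ(x) = (−x₁,x₂,−x₃,x₄,½−x₅,x₆,½−x₇)` -/
def gammaT : T7 → T7 := fun (x1, x2, x3, x4, x5, x6, x7) =>
  (-x1, x2, -x3, x4, half - x5, x6, half - x7)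

lemma half_ne_zero : half ≠ 0 := by
  simp only [half, ne_eq, AddCircle.coe_eq_zero_iff, zsmul_eq_mul, mul_one]
  rintro ⟨n, hn⟩
  have h2 : ((2 * n : ℤ) : ℝ) = 1 := by push_cast; linarith
  have : (2 * n : ℤ) = 1 := by exact_mod_cast h2
  omega

lemma aux1 (a : A) : -(half - a) ≠ a := fun h =>
  half_ne_zero (by rwa [neg_sub, sub_eq_self] at h)

lemma aux2 (a : A) : half - (-a) ≠ a := fun h =>
  half_ne_zero (by rwa [sub_neg_eq_add, add_eq_right] at h)

/-- The composites βγ, γα, αβ and αβγ act freely: they have no fixed points on `T⁷`. -/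
theorem stmt_1 :
    (∀ p : T7, betaT (gammaT p) ≠ p) ∧
    (∀ p : T7, gammaT (alphaT p) ≠ p) ∧
    (∀ p : T7, alphaT (betaT p) ≠ p) ∧
    (∀ p : T7, alphaT (betaT (gammaT p)) ≠ p) := by
  refine ⟨?_, ?_, ?_, ?_⟩ <;>
    rintro ⟨x1, x2, x3, x4, x5, x6, x7⟩ h <;>
    simp only [alphaT, betaT, gammaT, Prod.mk.injEq] at h
  · exact aux1 x7 h.2.2.2.2.2.2
  · exact aux2 x5 h.2.2.2.2.1
  · exact aux1 x6 h.2.2.2.2.2.1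
  · exact aux1 x5 h.2.2.2.2.1
end
end

section
/- The fixed point set of σ[z₀,…,z₅] = [z̄₁,−z̄₀,z̄₃,−z̄₂,z̄₅,z̄₄] on the hypersurface Y = {z₀¹²+z₁¹²+z₂¹²+z₃¹²+z₄³+z₅³ = 0} ⊂ ℂP⁵_{1,1,1,1,4,4} is exactly the three points p₁ = [0,0,0,0,1,−1], p₂ = [0,0,0,0,1,e^{πi/3}], p₃ = [0,0,0,0,1,e^{−πi/3}]. -/
noncomputable section

open Complex

/-- The weighted `ℂ*`-action on `ℂ⁶` with weights `(1,1,1,1,4,4)`: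
`u • (z₀,…,z₅) = (uz₀, uz₁, uz₂, uz₃, u⁴z₄, u⁴z₅)`. -/
def wAct (u : ℂ) (z : Fin 6 → ℂ) : Fin 6 → ℂ :=
  ![u * z 0, u * z 1, u * z 2, u * z 3, u^4 * z 4, u^4 * z 5]

/-- Two points of `ℂ⁶` lie in the same weighted `ℂ*`-orbit. -/
def wRel (z w : Fin 6 → ℂ) : Prop := ∃ u : ℂ, u ≠ 0 ∧ w = wAct u z

/-- `σ(z₀,…,z₅) = (z̄₁,−z̄₀,z̄₃,−z̄₂,z̄₅,z̄₄)`. -/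
def sigmaW (z : Fin 6 → ℂ) : Fin 6 → ℂ :=
  ![starRingEnd ℂ (z 1), -(starRingEnd ℂ (z 0)), starRingEnd ℂ (z 3),
    -(starRingEnd ℂ (z 2)), starRingEnd ℂ (z 5), starRingEnd ℂ (z 4)]

/-- The defining polynomial `z₀¹² + z₁¹² + z₂¹² + z₃¹² + z₄³ + z₅³`. -/
def P (z : Fin 6 → ℂ) : ℂ :=
  z 0 ^ 12 + z 1 ^ 12 + z 2 ^ 12 + z 3 ^ 12 + z 4 ^ 3 + z 5 ^ 3

/-- `p₁ = [0,0,0,0,1,−1]`. -/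
def p1 : Fin 6 → ℂ := ![0, 0, 0, 0, 1, -1]
/-- `p₂ = [0,0,0,0,1,e^{πi/3}]`. -/
def p2 : Fin 6 → ℂ := ![0, 0, 0, 0, 1, Complex.exp (Real.pi * I / 3)]
/-- `p₃ = [0,0,0,0,1,e^{−πi/3}]`. -/
def p3 : Fin 6 → ℂ := ![0, 0, 0, 0, 1, Complex.exp (-(Real.pi * I) / 3)]

/- ### Auxiliary facts about the primitive sixth roots of unity involved -/

private def w : ℂ := Complex.exp (Real.pi * I / 3)
private def w' : ℂ := Complex.exp (-(Real.pi * I) / 3)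

private lemma w_cube : w ^ 3 = -1 := by
  have h : ((3 : ℕ) : ℂ) * ((Real.pi : ℂ) * I / 3) = (Real.pi : ℂ) * I := by
    push_cast; ring
  rw [w, ← Complex.exp_nat_mul, h, Complex.exp_pi_mul_I]

private lemma w'_cube : w' ^ 3 = -1 := by
  have h : ((3 : ℕ) : ℂ) * (-((Real.pi : ℂ) * I) / 3) = -((Real.pi : ℂ) * I) := by
    push_cast; ring
  rw [w', ← Complex.exp_nat_mul, h, Complex.exp_neg, Complex.exp_pi_mul_I]
  norm_num

private lemma w_mul_w' : w * w' = 1 := by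
  rw [w, w', ← Complex.exp_add]
  have : (Real.pi : ℂ) * I / 3 + -((Real.pi : ℂ) * I) / 3 = 0 := by ring
  rw [this, Complex.exp_zero]

private lemma w_im : w.im = Real.sin (Real.pi / 3) := by
  have h : (Real.pi : ℂ) * I / 3 = ((Real.pi / 3 : ℝ) : ℂ) * I := by push_cast; ring
  rw [w, h, Complex.exp_ofReal_mul_I_im]

private lemma w'_im : w'.im = -Real.sin (Real.pi / 3) := by
  have h : -((Real.pi : ℂ) * I) / 3 = ((-(Real.pi / 3) : ℝ) : ℂ) * I := by push_cast; ring
  rw [w', h, Complex.exp_ofReal_mul_I_im, Real.sin_neg]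

private lemma sin_pos : 0 < Real.sin (Real.pi / 3) := by
  apply Real.sin_pos_of_pos_of_lt_pi
  · positivity
  · linarith [Real.pi_pos]

private lemma w_im_pos : 0 < w.im := by rw [w_im]; exact sin_pos

private lemma w'_im_neg : w'.im < 0 := by
  rw [w'_im]; linarith [sin_pos]

private lemma w_ne_neg_one : w ≠ -1 := by
  intro h
  have := w_im_pos
  rw [h] at this
  norm_num at this

private lemma w'_ne_neg_one : w' ≠ -1 := by
  intro h
  have := w'_im_neg
  rw [h] at this
  norm_num at this

private lemma w_ne_w' : w ≠ w' := by
  intro h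
  have h1 := w_im_pos
  rw [h] at h1
  linarith [w'_im_neg]

private lemma w_ne_zero : w ≠ 0 := Complex.exp_ne_zero _

private lemma conj_w : (starRingEnd ℂ) w = w' := by
  rw [w, w', ← Complex.exp_conj]
  congr 1
  have h1 : (Real.pi : ℂ) * I / 3 = ((Real.pi / 3 : ℝ) : ℂ) * I := by push_cast; ring
  have h2 : -((Real.pi : ℂ) * I) / 3 = ((Real.pi / 3 : ℝ) : ℂ) * (-I) := by push_cast; ring
  rw [h1, h2, map_mul, Complex.conj_ofReal, Complex.conj_I]

private lemma conj_w' : (starRingEnd ℂ) w' = w := by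
  rw [← conj_w, Complex.conj_conj]

private lemma w_sum : w + w' = 1 := by
  have hq : w ^ 2 - w + 1 = 0 := by
    have h1 : (w + 1) * (w ^ 2 - w + 1) = 0 := by
      linear_combination w_cube
    rcases mul_eq_zero.1 h1 with h | h
    · exact absurd (by linear_combination h) w_ne_neg_one
    · exact h
  have h2 : w * (w + w') = w * 1 := by
    linear_combination hq + w_mul_w'
  exact mul_left_cancel₀ w_ne_zero h2

/-- Cube roots of `-1`. -/
private lemma cube_root_cases (c : ℂ) (hc : c ^ 3 = -1) : c = -1 ∨ c = w ∨ c = w' := by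
  have key : (c + 1) * ((c - w) * (c - w')) = 0 := by
    linear_combination hc + (-(c^2) - c) * w_sum + (c + 1) * w_mul_w'
  rcases mul_eq_zero.1 key with h | h
  · left; linear_combination h
  · rcases mul_eq_zero.1 h with h | h
    · right; left; linear_combination h
    · right; right; linear_combination h

/-- If `z = (0,0,0,0,a,ca)` with `a ≠ 0`, then `[z] = [0,0,0,0,1,c]`. -/
private lemma rel_point (z : Fin 6 → ℂ) (c : ℂ) (h0 : z 0 = 0) (h1 : z 1 = 0)
    (h2 : z 2 = 0) (h3 : z 3 = 0) (h4 : z 4 ≠ 0) (h5 : z 5 = c * z 4) :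
    wRel z ![0, 0, 0, 0, 1, c] := by
  obtain ⟨u, hu4⟩ := IsAlgClosed.exists_pow_nat_eq (k := ℂ) (z 4)⁻¹ (n := 4) (by norm_num)
  refine ⟨u, ?_, ?_⟩
  · intro h; subst h; apply inv_ne_zero h4; rw [← hu4]; norm_num
  · funext i
    fin_cases i
    · show (0 : ℂ) = u * z 0; rw [h0, mul_zero]
    · show (0 : ℂ) = u * z 1; rw [h1, mul_zero]
    · show (0 : ℂ) = u * z 2; rw [h2, mul_zero]
    · show (0 : ℂ) = u * z 3; rw [h3, mul_zero]
    · show (1 : ℂ) = u ^ 4 * z 4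
      rw [hu4, inv_mul_cancel₀ h4]
    · show c = u ^ 4 * z 5
      rw [hu4, h5]
      field_simp

/-- If `[z] = [0,0,0,0,1,c]` with `c c̄ = 1`, then `[z]` is `σ`-fixed. -/
private lemma fixed_of_rel (z : Fin 6 → ℂ) (c : ℂ) (hc : c * (starRingEnd ℂ) c = 1)
    (h : wRel z ![0, 0, 0, 0, 1, c]) : wRel z (sigmaW z) := by
  obtain ⟨u, hu, he⟩ := h
  have e0 : (0 : ℂ) = u * z 0 := congrFun he 0
  have e1 : (0 : ℂ) = u * z 1 := congrFun he 1
  have e2 : (0 : ℂ) = u * z 2 := congrFun he 2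
  have e3 : (0 : ℂ) = u * z 3 := congrFun he 3
  have e4 : (1 : ℂ) = u ^ 4 * z 4 := congrFun he 4
  have e5 : c = u ^ 4 * z 5 := congrFun he 5
  have hz0 : z 0 = 0 := by
    rcases mul_eq_zero.1 e0.symm with h | h; exact absurd h hu; exact h
  have hz1 : z 1 = 0 := by
    rcases mul_eq_zero.1 e1.symm with h | h; exact absurd h hu; exact h
  have hz2 : z 2 = 0 := by
    rcases mul_eq_zero.1 e2.symm with h | h; exact absurd h hu; exact h
  have hz3 : z 3 = 0 := by
    rcases mul_eq_zero.1 e3.symm with h | h; exact absurd h hu; exact h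
  have hz4 : z 4 ≠ 0 := by
    intro h; rw [h, mul_zero] at e4; exact one_ne_zero e4
  have hz5 : z 5 = c * z 4 := by
    linear_combination z 5 * e4 - z 4 * e5
  have hcne : c ≠ 0 := by
    intro h; rw [h] at hc; simp at hc
  have hv4ne : ((starRingEnd ℂ) c * (starRingEnd ℂ) (z 4) * (z 4)⁻¹ : ℂ) ≠ 0 := by
    apply mul_ne_zero (mul_ne_zero _ _) (inv_ne_zero hz4)
    · simpa using hcne
    · simpa using hz4
  obtain ⟨v, hv4⟩ := IsAlgClosed.exists_pow_nat_eq (k := ℂ)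
    ((starRingEnd ℂ) c * (starRingEnd ℂ) (z 4) * (z 4)⁻¹) (n := 4) (by norm_num)
  refine ⟨v, ?_, ?_⟩
  · intro h; subst h; apply hv4ne; rw [← hv4]; norm_num
  · funext i
    fin_cases i
    · show (starRingEnd ℂ) (z 1) = v * z 0; rw [hz0, hz1]; simp
    · show -((starRingEnd ℂ) (z 0)) = v * z 1; rw [hz0, hz1]; simp
    · show (starRingEnd ℂ) (z 3) = v * z 2; rw [hz2, hz3]; simp
    · show -((starRingEnd ℂ) (z 2)) = v * z 3; rw [hz2, hz3]; simp
    · show (starRingEnd ℂ) (z 5) = v ^ 4 * z 4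
      rw [hv4, hz5, map_mul]
      field_simp
    · show (starRingEnd ℂ) (z 4) = v ^ 4 * z 5
      rw [hv4, hz5]
      field_simp
      linear_combination -((starRingEnd ℂ) (z 4)) * hc

/-- The fixed point set of `σ` on `Y = {P = 0} ⊂ ℂP⁵_{1,1,1,1,4,4}` is exactly
the three points `p₁, p₂, p₃`: the points lie on `Y`, represent pairwise
distinct points of the weighted projective space, and a point `[z] ∈ Y` is
fixed by `σ` iff it equals one of them. -/
theorem stmt_13 :
    P p1 = 0 ∧ P p2 = 0 ∧ P p3 = 0 ∧
    (¬ wRel p1 p2) ∧ (¬ wRel p1 p3) ∧ (¬ wRel p2 p3) ∧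
    (∀ z : Fin 6 → ℂ, z ≠ 0 → P z = 0 →
      (wRel z (sigmaW z) ↔ (wRel z p1 ∨ wRel z p2 ∨ wRel z p3))) := by
  have hp1 : P p1 = 0 := by
    show (0 : ℂ) ^ 12 + 0 ^ 12 + 0 ^ 12 + 0 ^ 12 + 1 ^ 3 + (-1) ^ 3 = 0
    norm_num
  have hp2 : P p2 = 0 := by
    show (0 : ℂ) ^ 12 + 0 ^ 12 + 0 ^ 12 + 0 ^ 12 + 1 ^ 3 + w ^ 3 = 0
    rw [w_cube]; norm_num
  have hp3 : P p3 = 0 := by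
    show (0 : ℂ) ^ 12 + 0 ^ 12 + 0 ^ 12 + 0 ^ 12 + 1 ^ 3 + w' ^ 3 = 0
    rw [w'_cube]; norm_num
  refine ⟨hp1, hp2, hp3, ?_, ?_, ?_, ?_⟩
  · rintro ⟨u, hu, he⟩
    have e4 : (1 : ℂ) = u ^ 4 * 1 := congrFun he 4
    have e5 : w = u ^ 4 * (-1) := congrFun he 5
    exact w_ne_neg_one (by linear_combination e4 + e5)
  · rintro ⟨u, hu, he⟩
    have e4 : (1 : ℂ) = u ^ 4 * 1 := congrFun he 4
    have e5 : w' = u ^ 4 * (-1) := congrFun he 5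
    exact w'_ne_neg_one (by linear_combination e4 + e5)
  · rintro ⟨u, hu, he⟩
    have e4 : (1 : ℂ) = u ^ 4 * 1 := congrFun he 4
    have e5 : w' = u ^ 4 * w := congrFun he 5
    exact w_ne_w' (by linear_combination w * e4 - e5)
  · intro z hz hP
    constructor
    · rintro ⟨u, hu, he⟩
      have e0 : (starRingEnd ℂ) (z 1) = u * z 0 := congrFun he 0
      have e1 : -((starRingEnd ℂ) (z 0)) = u * z 1 := congrFun he 1
      have e2 : (starRingEnd ℂ) (z 3) = u * z 2 := congrFun he 2
      have e3 : -((starRingEnd ℂ) (z 2)) = u * z 3 := congrFun he 3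
      have e4 : (starRingEnd ℂ) (z 5) = u ^ 4 * z 4 := congrFun he 4
      have e5 : (starRingEnd ℂ) (z 4) = u ^ 4 * z 5 := congrFun he 5
      have hns : (1 + ((‖u‖ : ℂ)) ^ 2) ≠ 0 := by
        have h : (1 + ((‖u‖ : ℂ)) ^ 2) = ((1 + ‖u‖ ^ 2 : ℝ) : ℂ) := by push_cast; ring
        rw [h]
        exact_mod_cast ne_of_gt (by positivity : (0:ℝ) < 1 + ‖u‖ ^ 2)
      have hc : (starRingEnd ℂ) u * u = ((‖u‖ : ℂ)) ^ 2 := conj_mul' u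
      have hz1 : z 1 = 0 := by
        have c0 : z 1 = (starRingEnd ℂ) u * (starRingEnd ℂ) (z 0) := by
          have := congrArg (starRingEnd ℂ) e0
          simpa [map_mul] using this
        have c1 : (starRingEnd ℂ) (z 0) = -(u * z 1) := by linear_combination -e1
        have key : (1 + ((‖u‖ : ℂ)) ^ 2) * z 1 = 0 := by
          rw [c1] at c0
          linear_combination c0 - z 1 * hc
        rcases mul_eq_zero.1 key with h | h
        · exact absurd h hns
        · exact h
      have hz0 : z 0 = 0 := by
        have h : (starRingEnd ℂ) (z 0) = 0 := by
          rw [hz1, mul_zero] at e1; linear_combination -e1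
        simpa using h
      have hz3 : z 3 = 0 := by
        have c0 : z 3 = (starRingEnd ℂ) u * (starRingEnd ℂ) (z 2) := by
          have := congrArg (starRingEnd ℂ) e2
          simpa [map_mul] using this
        have c1 : (starRingEnd ℂ) (z 2) = -(u * z 3) := by linear_combination -e3
        have key : (1 + ((‖u‖ : ℂ)) ^ 2) * z 3 = 0 := by
          rw [c1] at c0
          linear_combination c0 - z 3 * hc
        rcases mul_eq_zero.1 key with h | h
        · exact absurd h hns
        · exact h
      have hz2 : z 2 = 0 := by
        have h : (starRingEnd ℂ) (z 2) = 0 := by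
          rw [hz3, mul_zero] at e3; linear_combination -e3
        simpa using h
      have hz4 : z 4 ≠ 0 := by
        intro h4
        have h5 : z 5 = 0 := by
          have h : (starRingEnd ℂ) (z 4) = 0 := by simp [h4]
          rw [h] at e5
          rcases mul_eq_zero.1 e5.symm with h | h
          · exact absurd h (pow_ne_zero _ hu)
          · exact h
        apply hz
        funext i
        fin_cases i
        · exact hz0
        · exact hz1
        · exact hz2
        · exact hz3
        · exact h4
        · exact h5
      have hPz : z 4 ^ 3 + z 5 ^ 3 = 0 := by
        have h := hP
        simp only [P, hz0, hz1, hz2, hz3] at h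
        linear_combination h
      have hcube : (z 5 * (z 4)⁻¹) ^ 3 = -1 := by
        field_simp
        linear_combination hPz
      have hz5 : z 5 = (z 5 * (z 4)⁻¹) * z 4 := by field_simp
      rcases cube_root_cases _ hcube with h | h | h <;> rw [h] at hz5
      · exact Or.inl (rel_point z (-1) hz0 hz1 hz2 hz3 hz4 hz5)
      · exact Or.inr (Or.inl (rel_point z w hz0 hz1 hz2 hz3 hz4 hz5))
      · exact Or.inr (Or.inr (rel_point z w' hz0 hz1 hz2 hz3 hz4 hz5))
    · rintro (h | h | h)
      · exact fixed_of_rel z (-1) (by simp) h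
      · exact fixed_of_rel z w (by rw [conj_w]; exact w_mul_w') h
      · exact fixed_of_rel z w' (by rw [conj_w', mul_comm]; exact w_mul_w') h
end
end
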